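/- Fix ξ ∈ ℝ³ ∖ {0} and set r := |ξ|, z := θ − i r, and K₂(ξ, θ) := −1/z² + 2i r / z³ for θ ∈ ℝ. Let ρ > 0 and κ > 0 be the unique positive reals with κ² = 1 + 3ρ² and r = ρ + 4ρ³ (so that the roots of ζ³ + ζ + 2r are −2ρ and ρ ± iκ), and set α := −4ρ³/(1 + 12ρ²) and β := −(1/(2κ)) (1 + 24ρ⁴/(1 + 12ρ²)). Then 1 + K₂(ξ, θ) ≠ 0 for all real θ, and for every τ ≥ 0: −(1/(2π)) ∫_ℝ [K₂(ξ, θ)/(1 + K₂(ξ, θ))] e^{i θ τ} dθ = 2α e^{−(2ρ + r)τ} − 2 e^{−(r − ρ)τ} Re{ (α + iβ) e^{i κ τ} }. -/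

import Mathlib

open MeasureTheory Complex Set Real FourierTransform

noncomputable section GreenAux

/-- exponential integral over `Ioi 0` : integrability -/
lemma my_integrableOn_cexp {c : ℂ} (hc : c.re < 0) :
    IntegrableOn (fun t : ℝ => Complex.exp (c * t)) (Ioi 0) := by
  apply Integrable.mono' ((exp_neg_integrableOn_Ioi 0 (neg_pos.2 hc)).congr_fun
    (fun x _ => rfl) measurableSet_Ioi)
  · exact (Complex.continuous_exp.comp (by continuity)).aestronglyMeasurable
  · filter_upwards with t
    simp [Complex.norm_exp, neg_mul]

/-- exponential integral over `Ioi 0` : value -/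
lemma my_integral_cexp {c : ℂ} (hc : c.re < 0) :
    ∫ t : ℝ in Ioi 0, Complex.exp (c * t) = -c⁻¹ := by
  have hc0 : c ≠ 0 := fun h => by simp [h] at hc
  have hd : ∀ x ∈ Ici (0:ℝ), HasDerivAt (fun t : ℝ => c⁻¹ * Complex.exp (c * t))
      (Complex.exp (c * x)) x := by
    intro x _
    have h1 : HasDerivAt (fun t : ℝ => c * (t:ℂ)) c x := by
      simpa using ((hasDerivAt_id x).ofReal_comp.const_mul c)
    have := h1.cexp.const_mul c⁻¹
    rw [mul_comm (Complex.exp _) c, ← mul_assoc, inv_mul_cancel₀ hc0, one_mul] at this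
    exact this
  have ht : Filter.Tendsto (fun t : ℝ => c⁻¹ * Complex.exp (c * t)) Filter.atTop (nhds 0) := by
    rw [tendsto_zero_iff_norm_tendsto_zero]
    have h2 : Filter.Tendsto (fun t : ℝ => Real.exp (c.re * t)) Filter.atTop (nhds 0) := by
      have h3 : Filter.Tendsto (fun t : ℝ => (-c.re) * t) Filter.atTop Filter.atTop :=
        Filter.Tendsto.const_mul_atTop (by linarith) Filter.tendsto_id
      simpa [Function.comp_def, neg_neg] using
        (Real.tendsto_exp_neg_atTop_nhds_zero.comp h3)
    have := h2.const_mul ‖(c⁻¹ : ℂ)‖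
    simpa [norm_mul, Complex.norm_exp] using this
  have := integral_Ioi_of_hasDerivAt_of_tendsto' hd (my_integrableOn_cexp hc) ht
  simpa using this

lemma my_sq_bound (a b : ℝ) (hb : b ≠ 0) (y : ℝ) :
    b^2/(2*(1+a^2+b^2)) * (1+y^2) ≤ (y-a)^2 + b^2 := by
  rw [div_mul_eq_mul_div, div_le_iff₀ (by positivity)]
  nlinarith [sq_nonneg (b*(y-2*a)), sq_nonneg (y-a), sq_nonneg (a*(y-a)), sq_nonneg b,
    sq_nonneg (b^2)]

lemma my_integrable_den {u v : ℂ} (hu : u.im ≠ 0) (hv : v.im ≠ 0) :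
    Integrable (fun y : ℝ => (((y:ℂ) - u) * ((y:ℂ) - v))⁻¹) := by
  set cu := u.im^2/(2*(1+u.re^2+u.im^2)) with hcu
  set cv := v.im^2/(2*(1+v.re^2+v.im^2)) with hcv
  have hcu0 : 0 < cu := by positivity
  have hcv0 : 0 < cv := by positivity
  have habs : ∀ (w : ℂ) (c : ℝ), c = w.im^2/(2*(1+w.re^2+w.im^2)) → w.im ≠ 0 → ∀ y : ℝ,
      Real.sqrt c * Real.sqrt (1+y^2) ≤ ‖(y:ℂ) - w‖ := by
    intro w c hc hw y
    rw [← Real.sqrt_mul (by rw [hc]; positivity)]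
    rw [show ‖(y:ℂ) - w‖ = Real.sqrt ((y - w.re)^2 + w.im^2) by
      rw [Complex.norm_def, Complex.normSq_apply]; norm_num [sq]]
    apply Real.sqrt_le_sqrt
    rw [hc]; exact my_sq_bound w.re w.im hw y
  have hne : ∀ y : ℝ, (((y:ℂ) - u) ≠ 0) := fun y h => hu (by
    have := congrArg Complex.im h; simpa using this.symm)
  have hne' : ∀ y : ℝ, (((y:ℂ) - v) ≠ 0) := fun y h => hv (by
    have := congrArg Complex.im h; simpa using this.symm)
  have hcont : Continuous (fun y : ℝ => (((y:ℂ) - u) * ((y:ℂ) - v))⁻¹) := by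
    apply Continuous.inv₀
    · continuity
    · intro y; exact mul_ne_zero (hne y) (hne' y)
  apply Integrable.mono' ((integrable_inv_one_add_sq).const_mul ((Real.sqrt cu * Real.sqrt cv)⁻¹))
  · exact hcont.aestronglyMeasurable
  · filter_upwards with y
    have h1 := habs u cu hcu hu y
    have h2 := habs v cv hcv hv y
    have hy : (0:ℝ) < 1 + y^2 := by positivity
    have hprod : (Real.sqrt cu * Real.sqrt cv) * (1 + y^2)
        ≤ ‖(y:ℂ) - u‖ * ‖(y:ℂ) - v‖ := by
      have h3 := mul_le_mul h1 h2 (by positivity) (norm_nonneg _)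
      calc (Real.sqrt cu * Real.sqrt cv) * (1+y^2)
          = (Real.sqrt cu * Real.sqrt (1+y^2)) * (Real.sqrt cv * Real.sqrt (1+y^2)) := by
            rw [show (Real.sqrt cu * Real.sqrt (1+y^2)) * (Real.sqrt cv * Real.sqrt (1+y^2))
              = Real.sqrt cu * Real.sqrt cv * (Real.sqrt (1+y^2) * Real.sqrt (1+y^2)) by ring,
              Real.mul_self_sqrt hy.le]
        _ ≤ _ := h3
    rw [norm_inv, norm_mul]
    rw [← mul_inv]
    exact inv_anti₀ (by positivity) hprod

lemma my_cubic_factor (ρ κ r : ℝ) (hκ : (κ:ℂ)^2 = 1 + 3*(ρ:ℂ)^2)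
    (hr : (r:ℂ) = ρ + 4*(ρ:ℂ)^3) (ζ : ℂ) :
    (ζ + 2*ρ) * (ζ - ρ - I*κ) * (ζ - ρ + I*κ) = ζ^3 + ζ + 2*r := by
  linear_combination (-2:ℂ)*hr + (-2*(ρ:ℂ)*κ^2 - ζ*κ^2)*Complex.I_sq + (2*(ρ:ℂ)+ζ)*hκ

lemma my_pfrac (ρ κ r α β : ℝ) (hκ : (κ:ℂ)^2 = 1 + 3*(ρ:ℂ)^2)
    (hr : (r:ℂ) = ρ + 4*(ρ:ℂ)^3)
    (ha : (α:ℂ)*(1+12*(ρ:ℂ)^2) = -4*(ρ:ℂ)^3)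
    (hb : (β:ℂ)*(2*κ)*(1+12*(ρ:ℂ)^2) = -(1+12*(ρ:ℂ)^2+24*(ρ:ℂ)^4))
    (hκ0 : (κ:ℂ) ≠ 0) (hden : (1+12*(ρ:ℂ)^2) ≠ 0) (ζ : ℂ) :
    2*α*((ζ-ρ-I*κ)*(ζ-ρ+I*κ)) - (α+I*β)*((ζ+2*ρ)*(ζ-ρ+I*κ))
      - (α-I*β)*((ζ+2*ρ)*(ζ-ρ-I*κ)) = -(ζ+2*r) := by
  have hM : (2*(κ:ℂ)*(1+12*(ρ:ℂ)^2)) ≠ 0 :=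
    mul_ne_zero (mul_ne_zero two_ne_zero hκ0) hden
  apply mul_left_cancel₀ hM
  linear_combination
    (-4*(κ:ℂ)^3*I^2 + 12*(ρ:ℂ)^2*κ - 12*ζ*ρ*κ) * ha +
    (-4*(ρ:ℂ)*κ*I^2 - 2*ζ*κ*I^2) * hb +
    (4*(κ:ℂ) + 48*(ρ:ℂ)^2*κ) * hr +
    (4*(ρ:ℂ)*κ + 48*(ρ:ℂ)^3*κ + 16*(ρ:ℂ)^3*κ^3 + 96*(ρ:ℂ)^5*κ + 2*ζ*κ + 24*ζ*(ρ:ℂ)^2*κ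
      + 48*ζ*(ρ:ℂ)^4*κ) * Complex.I_sq +
    (-16*(ρ:ℂ)^3*κ) * hκ

lemma my_key (ρ κ r α β : ℝ) (hκ : (κ:ℂ)^2 = 1 + 3*(ρ:ℂ)^2)
    (hr : (r:ℂ) = ρ + 4*(ρ:ℂ)^3)
    (ha : (α:ℂ)*(1+12*(ρ:ℂ)^2) = -4*(ρ:ℂ)^3)
    (hb : (β:ℂ)*(2*κ)*(1+12*(ρ:ℂ)^2) = -(1+12*(ρ:ℂ)^2+24*(ρ:ℂ)^4))
    (hκ0 : (κ:ℂ) ≠ 0) (hden : (1+12*(ρ:ℂ)^2) ≠ 0) (ζ : ℂ)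
    (h1 : ζ + 2*ρ ≠ 0) (h2 : ζ - ρ - I*κ ≠ 0) (h3 : ζ - ρ + I*κ ≠ 0) :
    2*(α:ℂ)*(ζ + 2*ρ)⁻¹ + (-((α:ℂ)+I*β))*(ζ - ρ - I*κ)⁻¹ + (-((α:ℂ)-I*β))*(ζ - ρ + I*κ)⁻¹
      = -((ζ+2*r)/(ζ^3+ζ+2*r)) := by
  rw [← my_cubic_factor ρ κ r hκ hr ζ]
  have hpf := my_pfrac ρ κ r α β hκ hr ha hb hκ0 hden ζ
  field_simp
  all_goals linear_combination hpf

lemma my_frac_pair (x a b C : ℂ) (ha : x - a ≠ 0) (hb : x - b ≠ 0) :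
    C*(b-a) * ((x-b)*(x-a))⁻¹ = C*(x-b)⁻¹ - C*(x-a)⁻¹ := by
  field_simp
  try ring

lemma my_inv_I_mul (w : ℂ) : (I*w)⁻¹ = -I * w⁻¹ := by
  rw [mul_inv, Complex.inv_I]


def myW1 (ρ r : ℝ) : ℂ := Complex.I*((r:ℂ)+2*ρ)
def myW2 (ρ κ r : ℝ) : ℂ := (κ:ℂ) + Complex.I*((r:ℂ)-ρ)
def myW3 (ρ κ r : ℝ) : ℂ := -(κ:ℂ) + Complex.I*((r:ℂ)-ρ)
def myC1 (α : ℝ) : ℂ := 2*(α:ℂ)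
def myC2 (α β : ℝ) : ℂ := -((α:ℂ) + Complex.I*(β:ℂ))
def myC3 (α β : ℝ) : ℂ := -((α:ℂ) - Complex.I*(β:ℂ))

def myG (ρ κ r α β : ℝ) : ℝ → ℂ := fun t =>
  myC1 α * Complex.exp ((I*myW1 ρ r)*t) + myC2 α β * Complex.exp ((I*myW2 ρ κ r)*t)
    + myC3 α β * Complex.exp ((I*myW3 ρ κ r)*t)

def myg (ρ κ r α β : ℝ) : ℝ → ℂ := fun t => if 0 ≤ t then myG ρ κ r α β t else 0

lemma myG_zero (ρ κ r α β : ℝ) : myG ρ κ r α β 0 = 0 := by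
  simp only [myG, Complex.ofReal_zero, mul_zero, Complex.exp_zero, mul_one,
    myC1, myC2, myC3]
  ring

lemma myg_continuous (ρ κ r α β : ℝ) : Continuous (myg ρ κ r α β) := by
  apply Continuous.if
  · intro a ha
    have : a = 0 := by
      have h := ha
      rw [show {x : ℝ | 0 ≤ x} = Ici 0 from rfl, frontier_Ici] at h
      simpa using h
    simp [this, myG_zero]
  · exact Continuous.add (Continuous.add (by continuity) (by continuity)) (by continuity)
  · exact continuous_const

lemma re_I_mul_W1 (ρ r : ℝ) : (I * myW1 ρ r).re = -(r+2*ρ) := by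
  simp [myW1]
lemma re_I_mul_W2 (ρ κ r : ℝ) : (I * myW2 ρ κ r).re = -(r-ρ) := by
  simp [myW2]
lemma re_I_mul_W3 (ρ κ r : ℝ) : (I * myW3 ρ κ r).re = -(r-ρ) := by
  simp [myW3]

lemma myg_integrable (ρ κ r α β : ℝ) (h1 : 0 < r + 2*ρ) (h2 : 0 < r - ρ) :
    Integrable (myg ρ κ r α β) := by
  have : myg ρ κ r α β = Set.indicator (Ici 0) (myG ρ κ r α β) := by
    funext t; simp [myg, Set.indicator_apply, Set.mem_Ici]
  rw [this, integrable_indicator_iff measurableSet_Ici,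
    integrableOn_Ici_iff_integrableOn_Ioi]
  unfold myG
  refine Integrable.add (Integrable.add ?_ ?_) ?_
  · exact Integrable.const_mul
      (my_integrableOn_cexp (c := I*myW1 ρ r) (by rw [re_I_mul_W1]; linarith)) _
  · exact Integrable.const_mul
      (my_integrableOn_cexp (c := I*myW2 ρ κ r) (by rw [re_I_mul_W2]; linarith)) _
  · exact Integrable.const_mul
      (my_integrableOn_cexp (c := I*myW3 ρ κ r) (by rw [re_I_mul_W3]; linarith)) _

lemma my_fourier_g (ρ κ r α β : ℝ) (h1 : 0 < r + 2*ρ) (h2 : 0 < r - ρ) (x : ℝ) :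
    𝓕 (myg ρ κ r α β) x =
      myC1 α * (-(I*myW1 ρ r - (↑(2*π*x))*I)⁻¹)
      + myC2 α β * (-(I*myW2 ρ κ r - (↑(2*π*x))*I)⁻¹)
      + myC3 α β * (-(I*myW3 ρ κ r - (↑(2*π*x))*I)⁻¹) := by
  have hre1 : (I*myW1 ρ r - (↑(2*π*x))*I).re < 0 := by
    rw [sub_re, re_I_mul_W1]; simp; linarith
  have hre2 : (I*myW2 ρ κ r - (↑(2*π*x))*I).re < 0 := by
    rw [sub_re, re_I_mul_W2]; simp; linarith
  have hre3 : (I*myW3 ρ κ r - (↑(2*π*x))*I).re < 0 := by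
    rw [sub_re, re_I_mul_W3]; simp; linarith
  rw [Real.fourier_real_eq_integral_exp_smul]
  have key : (fun v:ℝ => Complex.exp (↑(-2*π*v*x)*I) • myg ρ κ r α β v)
      = Set.indicator (Ioi 0) (fun v : ℝ =>
          myC1 α * Complex.exp ((I*myW1 ρ r - (↑(2*π*x))*I)*v)
          + myC2 α β * Complex.exp ((I*myW2 ρ κ r - (↑(2*π*x))*I)*v)
          + myC3 α β * Complex.exp ((I*myW3 ρ κ r - (↑(2*π*x))*I)*v)) := by
    funext v
    have hA : Complex.exp (↑(-2*π*v*x)*I) * Complex.exp ((I*myW1 ρ r)*v)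
        = Complex.exp ((I*myW1 ρ r - (↑(2*π*x))*I)*v) := by
      rw [← Complex.exp_add]; congr 1; push_cast; ring
    have hB : Complex.exp (↑(-2*π*v*x)*I) * Complex.exp ((I*myW2 ρ κ r)*v)
        = Complex.exp ((I*myW2 ρ κ r - (↑(2*π*x))*I)*v) := by
      rw [← Complex.exp_add]; congr 1; push_cast; ring
    have hC : Complex.exp (↑(-2*π*v*x)*I) * Complex.exp ((I*myW3 ρ κ r)*v)
        = Complex.exp ((I*myW3 ρ κ r - (↑(2*π*x))*I)*v) := by
      rw [← Complex.exp_add]; congr 1; push_cast; ring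
    rcases lt_trichotomy v 0 with hv|hv|hv
    · rw [Set.indicator_of_notMem (by simpa using hv.not_gt)]
      simp [myg, not_le.2 hv]
    · subst hv
      rw [Set.indicator_of_notMem (by simp)]
      simp [myg, myG_zero]
    · rw [Set.indicator_of_mem (Set.mem_Ioi.2 hv)]
      simp only [myg, if_pos hv.le, myG, smul_eq_mul]
      linear_combination myC1 α * hA + myC2 α β * hB + myC3 α β * hC
  rw [key, integral_indicator measurableSet_Ioi]
  have i1 : IntegrableOn (fun v : ℝ => myC1 α * Complex.exp ((I*myW1 ρ r - (↑(2*π*x))*I)*v)) (Ioi 0) :=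
    (my_integrableOn_cexp hre1).const_mul (myC1 α)
  have i2 : IntegrableOn (fun v : ℝ => myC2 α β * Complex.exp ((I*myW2 ρ κ r - (↑(2*π*x))*I)*v)) (Ioi 0) :=
    (my_integrableOn_cexp hre2).const_mul (myC2 α β)
  have i3 : IntegrableOn (fun v : ℝ => myC3 α β * Complex.exp ((I*myW3 ρ κ r - (↑(2*π*x))*I)*v)) (Ioi 0) :=
    (my_integrableOn_cexp hre3).const_mul (myC3 α β)
  have i12 : IntegrableOn (fun v : ℝ => myC1 α * Complex.exp ((I*myW1 ρ r - (↑(2*π*x))*I)*v)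
      + myC2 α β * Complex.exp ((I*myW2 ρ κ r - (↑(2*π*x))*I)*v)) (Ioi 0) := i1.add i2
  rw [integral_add i12 i3, integral_add i1 i2,
    integral_const_mul, integral_const_mul, integral_const_mul,
    my_integral_cexp hre1, my_integral_cexp hre2, my_integral_cexp hre3]


lemma my_alg (ρ κ r α β : ℝ) (hκ : (κ:ℂ)^2 = 1 + 3*(ρ:ℂ)^2)
    (hr : (r:ℂ) = ρ + 4*(ρ:ℂ)^3)
    (ha : (α:ℂ)*(1+12*(ρ:ℂ)^2) = -4*(ρ:ℂ)^3)
    (hb : (β:ℂ)*(2*κ)*(1+12*(ρ:ℂ)^2) = -(1+12*(ρ:ℂ)^2+24*(ρ:ℂ)^4))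
    (hκ0 : (κ:ℂ) ≠ 0) (hden : (1+12*(ρ:ℂ)^2) ≠ 0)
    (h1 : 0 < r + 2*ρ) (h2 : 0 < r - ρ) (hρ : 0 < ρ) (y : ℝ) :
    myC1 α * (-(I*myW1 ρ r - (y:ℂ)*I)⁻¹) + myC2 α β * (-(I*myW2 ρ κ r - (y:ℂ)*I)⁻¹)
      + myC3 α β * (-(I*myW3 ρ κ r - (y:ℂ)*I)⁻¹)
    = -(((((r:ℂ)+I*y))+2*r)/(((r:ℂ)+I*y)^3+((r:ℂ)+I*y)+2*r)) := by
  have e1 : I*myW1 ρ r - (y:ℂ)*I = -((((r:ℂ)+I*y)) + 2*ρ) := by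
    unfold myW1; linear_combination ((r:ℂ)+2*ρ)*Complex.I_sq
  have e2 : I*myW2 ρ κ r - (y:ℂ)*I = -((((r:ℂ)+I*y)) - ρ - I*κ) := by
    unfold myW2; linear_combination ((r:ℂ)-ρ)*Complex.I_sq
  have e3 : I*myW3 ρ κ r - (y:ℂ)*I = -((((r:ℂ)+I*y)) - ρ + I*κ) := by
    unfold myW3; linear_combination ((r:ℂ)-ρ)*Complex.I_sq
  have hF1 : (((r:ℂ)+I*y)) + 2*ρ ≠ 0 := by
    intro h; have := congrArg Complex.re h; simp at this; linarith
  have hF2 : (((r:ℂ)+I*y)) - ρ - I*κ ≠ 0 := by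
    intro h; have := congrArg Complex.re h; simp at this; linarith
  have hF3 : (((r:ℂ)+I*y)) - ρ + I*κ ≠ 0 := by
    intro h; have := congrArg Complex.re h; simp at this; linarith
  rw [e1, e2, e3, inv_neg, inv_neg, inv_neg, neg_neg, neg_neg, neg_neg]
  unfold myC1 myC2 myC3
  exact my_key ρ κ r α β hκ hr ha hb hκ0 hden _ hF1 hF2 hF3

lemma my_sum_pair (ρ κ r α β : ℝ) (h1 : 0 < r + 2*ρ) (h2 : 0 < r - ρ) (y : ℝ) :
    myC1 α * (-(I*myW1 ρ r - (y:ℂ)*I)⁻¹) + myC2 α β * (-(I*myW2 ρ κ r - (y:ℂ)*I)⁻¹)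
      + myC3 α β * (-(I*myW3 ρ κ r - (y:ℂ)*I)⁻¹)
    = (-I*myC2 α β*(myW2 ρ κ r - myW1 ρ r)) * (((y:ℂ)-myW2 ρ κ r)*((y:ℂ)-myW1 ρ r))⁻¹
      + (-I*myC3 α β*(myW3 ρ κ r - myW1 ρ r)) * (((y:ℂ)-myW3 ρ κ r)*((y:ℂ)-myW1 ρ r))⁻¹ := by
  have hy1 : (y:ℂ) - myW1 ρ r ≠ 0 := by
    intro h; have := congrArg Complex.im h; simp [myW1] at this; linarith
  have hy2 : (y:ℂ) - myW2 ρ κ r ≠ 0 := by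
    intro h; have := congrArg Complex.im h; simp [myW2] at this; linarith
  have hy3 : (y:ℂ) - myW3 ρ κ r ≠ 0 := by
    intro h; have := congrArg Complex.im h; simp [myW3] at this; linarith
  have f1 : I*myW1 ρ r - (y:ℂ)*I = -(I*((y:ℂ) - myW1 ρ r)) := by ring
  have f2 : I*myW2 ρ κ r - (y:ℂ)*I = -(I*((y:ℂ) - myW2 ρ κ r)) := by ring
  have f3 : I*myW3 ρ κ r - (y:ℂ)*I = -(I*((y:ℂ) - myW3 ρ κ r)) := by ring
  rw [f1, f2, f3, inv_neg, inv_neg, inv_neg, neg_neg, neg_neg, neg_neg,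
    my_inv_I_mul, my_inv_I_mul, my_inv_I_mul]
  have p2 := my_frac_pair (y:ℂ) (myW1 ρ r) (myW2 ρ κ r) (-I*myC2 α β) hy1 hy2
  have p3 := my_frac_pair (y:ℂ) (myW1 ρ r) (myW3 ρ κ r) (-I*myC3 α β) hy1 hy3
  have hCsum : myC1 α + myC2 α β + myC3 α β = 0 := by
    unfold myC1 myC2 myC3; ring
  linear_combination (-1 : ℂ)*p2 + (-1 : ℂ)*p3 + (-I*((y:ℂ) - myW1 ρ r)⁻¹) * hCsum


lemma my_div_helper (a b c d : ℂ) (hb : b ≠ 0) (hc : c ≠ 0) (hd : d ≠ 0) :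
    (d*a/c)/(d*b/c) = a/b := by
  field_simp

lemma my_z_ne (r : ℝ) (hrpos : 0 < r) (θ : ℝ) : ((θ:ℂ) - I*r) ≠ 0 := by
  intro h; have := congrArg Complex.im h; simp at this; linarith

lemma myF1_ne (ρ r : ℝ) (h1 : 0 < r + 2*ρ) (θ : ℝ) : ((r:ℂ)+I*θ) + 2*ρ ≠ 0 := by
  intro h; have := congrArg Complex.re h; simp at this; linarith

lemma myF2_ne (ρ κ r : ℝ) (h2 : 0 < r - ρ) (θ : ℝ) : ((r:ℂ)+I*θ) - ρ - I*κ ≠ 0 := by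
  intro h; have := congrArg Complex.re h; simp at this; linarith

lemma myF3_ne (ρ κ r : ℝ) (h2 : 0 < r - ρ) (θ : ℝ) : ((r:ℂ)+I*θ) - ρ + I*κ ≠ 0 := by
  intro h; have := congrArg Complex.re h; simp at this; linarith

lemma my_cubic_ne (ρ κ r : ℝ) (hκc : (κ:ℂ)^2 = 1 + 3*(ρ:ℂ)^2)
    (hrc : (r:ℂ) = ρ + 4*(ρ:ℂ)^3) (h1 : 0 < r + 2*ρ) (h2 : 0 < r - ρ) (θ : ℝ) :
    ((r:ℂ)+I*θ)^3 + ((r:ℂ)+I*θ) + 2*r ≠ 0 := by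
  rw [← my_cubic_factor ρ κ r hκc hrc]
  exact mul_ne_zero (mul_ne_zero (myF1_ne ρ r h1 θ) (myF2_ne ρ κ r h2 θ)) (myF3_ne ρ κ r h2 θ)

lemma my_one_add_eq (r : ℝ) (hrpos : 0 < r) (θ : ℝ) :
    (1:ℂ) + (-(((θ:ℂ) - I*r)^2)⁻¹ + 2*I*r*(((θ:ℂ) - I*r)^3)⁻¹)
      = (I*(((r:ℂ)+I*θ)^3+((r:ℂ)+I*θ)+2*r)) / ((θ:ℂ) - I*r)^3 := by
  have hz := my_z_ne r hrpos θ
  have step1 : (1:ℂ) + (-(((θ:ℂ) - I*r)^2)⁻¹ + 2*I*r*(((θ:ℂ) - I*r)^3)⁻¹)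
      = (((θ:ℂ) - I*r)^3 - ((θ:ℂ) - I*r) + 2*I*r) / ((θ:ℂ) - I*r)^3 := by
    field_simp
    ring
  have step2 : ((θ:ℂ) - I*r)^3 - ((θ:ℂ) - I*r) + 2*I*r
      = I * (((r:ℂ)+I*θ)^3+((r:ℂ)+I*θ)+2*r) := by
    linear_combination (-(r:ℂ)^3*I - θ - 3*(θ:ℂ)^2*r*I + (θ:ℂ)^3 - (θ:ℂ)^3*I^2) * Complex.I_sq
  rw [step1, step2]

lemma my_one_add_ne (ρ κ r : ℝ) (hκc : (κ:ℂ)^2 = 1 + 3*(ρ:ℂ)^2)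
    (hrc : (r:ℂ) = ρ + 4*(ρ:ℂ)^3) (h1 : 0 < r + 2*ρ) (h2 : 0 < r - ρ) (hrpos : 0 < r) (θ : ℝ) :
    (1:ℂ) + (-(((θ:ℂ) - I*r)^2)⁻¹ + 2*I*r*(((θ:ℂ) - I*r)^3)⁻¹) ≠ 0 := by
  rw [my_one_add_eq r hrpos θ]
  exact div_ne_zero (mul_ne_zero Complex.I_ne_zero (my_cubic_ne ρ κ r hκc hrc h1 h2 θ))
    (pow_ne_zero 3 (my_z_ne r hrpos θ))

lemma my_ratio (ρ κ r : ℝ) (hκc : (κ:ℂ)^2 = 1 + 3*(ρ:ℂ)^2)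
    (hrc : (r:ℂ) = ρ + 4*(ρ:ℂ)^3) (h1 : 0 < r + 2*ρ) (h2 : 0 < r - ρ) (hrpos : 0 < r) (θ : ℝ) :
    (-(((θ:ℂ) - I*r)^2)⁻¹ + 2*I*r*(((θ:ℂ) - I*r)^3)⁻¹)
        / ((1:ℂ) + (-(((θ:ℂ) - I*r)^2)⁻¹ + 2*I*r*(((θ:ℂ) - I*r)^3)⁻¹))
      = (((r:ℂ)+I*θ)+2*r) / (((r:ℂ)+I*θ)^3+((r:ℂ)+I*θ)+2*r) := by
  have hz := my_z_ne r hrpos θ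
  have stepK : (-(((θ:ℂ) - I*r)^2)⁻¹ + 2*I*r*(((θ:ℂ) - I*r)^3)⁻¹)
      = (I*(((r:ℂ)+I*θ)+2*r)) / ((θ:ℂ) - I*r)^3 := by
    have s1 : (-(((θ:ℂ) - I*r)^2)⁻¹ + 2*I*r*(((θ:ℂ) - I*r)^3)⁻¹)
        = (-((θ:ℂ) - I*r) + 2*I*r) / ((θ:ℂ) - I*r)^3 := by
      field_simp
    have s2 : -((θ:ℂ) - I*r) + 2*I*r = I * (((r:ℂ)+I*θ)+2*r) := by
      linear_combination (-(θ:ℂ)) * Complex.I_sq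
    rw [s1, s2]
  rw [my_one_add_eq r hrpos θ, stepK]
  exact my_div_helper _ _ _ _ (my_cubic_ne ρ κ r hκc hrc h1 h2 θ)
    (pow_ne_zero 3 hz) Complex.I_ne_zero


lemma myW1_im_ne (ρ r : ℝ) (h1 : 0 < r + 2*ρ) : (myW1 ρ r).im ≠ 0 := by
  simp [myW1]; intro h; linarith
lemma myW2_im_ne (ρ κ r : ℝ) (h2 : 0 < r - ρ) : (myW2 ρ κ r).im ≠ 0 := by
  simp [myW2]; intro h; linarith
lemma myW3_im_ne (ρ κ r : ℝ) (h2 : 0 < r - ρ) : (myW3 ρ κ r).im ≠ 0 := by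
  simp [myW3]; intro h; linarith

lemma my_integral_eq (ρ κ r α β : ℝ) (hρ : 0 < ρ) (hκpos : 0 < κ)
    (hκc : (κ:ℂ)^2 = 1 + 3*(ρ:ℂ)^2) (hrc : (r:ℂ) = ρ + 4*(ρ:ℂ)^3)
    (ha : (α:ℂ)*(1+12*(ρ:ℂ)^2) = -4*(ρ:ℂ)^3)
    (hb : (β:ℂ)*(2*κ)*(1+12*(ρ:ℂ)^2) = -(1+12*(ρ:ℂ)^2+24*(ρ:ℂ)^4))
    (h1 : 0 < r + 2*ρ) (h2 : 0 < r - ρ) (τ : ℝ) :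
    ∫ θ:ℝ, ((((r:ℂ)+I*θ)+2*r)/(((r:ℂ)+I*θ)^3+((r:ℂ)+I*θ)+2*r)) * Complex.exp (I*θ*τ)
      = -(2*π) * myg ρ κ r α β τ := by
  have hκ0 : (κ:ℂ) ≠ 0 := by
    simpa using (Complex.ofReal_ne_zero).2 hκpos.ne'
  have hdenc : (1 + 12*(ρ:ℂ)^2) ≠ 0 := by
    have hx : (1+12*ρ^2 : ℝ) ≠ 0 := by positivity
    exact_mod_cast hx
  have hFg : 𝓕 (myg ρ κ r α β) = fun x : ℝ =>
      -(((((r:ℂ)+I*(↑(2*π*x):ℂ))+2*r))/((((r:ℂ)+I*(↑(2*π*x):ℂ)))^3+((r:ℂ)+I*(↑(2*π*x):ℂ))+2*r)) := by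
    funext x
    rw [my_fourier_g ρ κ r α β h1 h2 x,
      my_alg ρ κ r α β hκc hrc ha hb hκ0 hdenc h1 h2 hρ (2*π*x)]
  have hFgInt : Integrable (𝓕 (myg ρ κ r α β)) := by
    have hfun2 : 𝓕 (myg ρ κ r α β) = fun x : ℝ =>
        (-I*myC2 α β*(myW2 ρ κ r - myW1 ρ r)) *
          (((↑(2*π*x):ℂ)-myW2 ρ κ r)*((↑(2*π*x):ℂ)-myW1 ρ r))⁻¹
        + (-I*myC3 α β*(myW3 ρ κ r - myW1 ρ r)) *
          (((↑(2*π*x):ℂ)-myW3 ρ κ r)*((↑(2*π*x):ℂ)-myW1 ρ r))⁻¹ := by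
      funext x
      rw [my_fourier_g ρ κ r α β h1 h2 x, my_sum_pair ρ κ r α β h1 h2 (2*π*x)]
    rw [hfun2]
    have h2pi : (2*π : ℝ) ≠ 0 := by positivity
    refine Integrable.add (Integrable.const_mul ?_ _) (Integrable.const_mul ?_ _)
    · exact (my_integrable_den (myW2_im_ne ρ κ r h2) (myW1_im_ne ρ r h1)).comp_mul_left' h2pi
    · exact (my_integrable_den (myW3_im_ne ρ κ r h2) (myW1_im_ne ρ r h1)).comp_mul_left' h2pi
  have hgInt := myg_integrable ρ κ r α β h1 h2
  have hinv := hgInt.fourierInv_fourier_eq (v := τ) hFgInt ((myg_continuous ρ κ r α β).continuousAt)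
  rw [Real.fourierInv_eq_fourier_neg,
    Real.fourier_real_eq_integral_exp_smul, hFg] at hinv
  have hcongr : (fun v : ℝ => Complex.exp (↑(-2*π*v*(-τ))*I) •
      (-(((((r:ℂ)+I*(↑(2*π*v):ℂ))+2*r))/((((r:ℂ)+I*(↑(2*π*v):ℂ)))^3+((r:ℂ)+I*(↑(2*π*v):ℂ))+2*r))))
      = fun v : ℝ => -(((((r:ℂ)+I*(↑(2*π*v):ℂ))+2*r)/((((r:ℂ)+I*(↑(2*π*v):ℂ)))^3+((r:ℂ)+I*(↑(2*π*v):ℂ))+2*r))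
          * Complex.exp (I*(↑(2*π*v):ℂ)*τ)) := by
    funext v
    rw [smul_eq_mul, show (↑(-2*π*v*(-τ)):ℂ)*I = I*(↑(2*π*v):ℂ)*τ by push_cast; ring]
    ring
  rw [hcongr, integral_neg] at hinv
  have hcv := MeasureTheory.Measure.integral_comp_mul_left
    (fun θ:ℝ => ((((r:ℂ)+I*θ)+2*r)/(((r:ℂ)+I*θ)^3+((r:ℂ)+I*θ)+2*r)) * Complex.exp (I*θ*τ)) (2*π)
  rw [show |(2*π:ℝ)⁻¹| = (2*π:ℝ)⁻¹ by rw [abs_of_pos]; positivity] at hcv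
  -- hcv : ∫ x, F (2πx) = (2π)⁻¹ • ∫ θ, F θ
  have hx : (∫ x:ℝ, ((((r:ℂ)+I*(↑(2*π*x):ℂ))+2*r)/((((r:ℂ)+I*(↑(2*π*x):ℂ)))^3+((r:ℂ)+I*(↑(2*π*x):ℂ))+2*r))
      * Complex.exp (I*(↑(2*π*x):ℂ)*τ)) = -(myg ρ κ r α β τ) := by
    rw [← neg_eq_iff_eq_neg, ← hinv]
  rw [hx] at hcv
  have h2π : (2*π:ℝ) ≠ 0 := by positivity
  rw [eq_comm, inv_smul_eq_iff₀ h2π] at hcv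
  rw [hcv, Complex.real_smul]
  push_cast
  ring


lemma myg_eval (ρ κ r α β : ℝ) (τ : ℝ) (hτ : 0 ≤ τ) :
    myg ρ κ r α β τ =
      ((2 * α * Real.exp (-((2 * ρ + r) * τ)) -
          2 * Real.exp (-((r - ρ) * τ)) *
            (((α : ℂ) + (β : ℂ) * Complex.I) *
              Complex.exp (Complex.I * (κ : ℂ) * (τ : ℂ))).re : ℝ) : ℂ) := by
  have E1 : Complex.exp ((I * myW1 ρ r) * τ) = ((Real.exp (-((2*ρ+r)*τ)) : ℝ) : ℂ) := by
    rw [Complex.ofReal_exp]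
    congr 1
    unfold myW1
    push_cast
    linear_combination ((r:ℂ)+2*ρ)*τ*Complex.I_sq
  have E2 : Complex.exp ((I * myW2 ρ κ r) * τ)
      = ((Real.exp (-((r-ρ)*τ)) : ℝ) : ℂ) * Complex.exp (I*κ*τ) := by
    rw [Complex.ofReal_exp, ← Complex.exp_add]
    congr 1
    unfold myW2
    push_cast
    linear_combination ((r:ℂ)-ρ)*τ*Complex.I_sq
  have E3 : Complex.exp ((I * myW3 ρ κ r) * τ)
      = ((Real.exp (-((r-ρ)*τ)) : ℝ) : ℂ) * Complex.exp (-(I*κ*τ)) := by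
    rw [Complex.ofReal_exp, ← Complex.exp_add]
    congr 1
    unfold myW3
    push_cast
    linear_combination ((r:ℂ)-ρ)*τ*Complex.I_sq
  have hc : (starRingEnd ℂ) (((α : ℂ) + (β : ℂ) * I) * Complex.exp (I * κ * τ))
      = ((α : ℂ) - (β : ℂ) * I) * Complex.exp (-(I * κ * τ)) := by
    rw [map_mul, ← Complex.exp_conj]
    simp [map_add, map_mul, Complex.conj_ofReal, Complex.conj_I]
    ring_nf
  have hadd := Complex.add_conj (((α : ℂ) + (β : ℂ) * I) * Complex.exp (I * κ * τ))
  rw [hc] at hadd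
  push_cast at hadd
  show (if 0 ≤ τ then myG ρ κ r α β τ else 0) = _
  rw [if_pos hτ]
  unfold myG myC1 myC2 myC3
  rw [E1, E2, E3]
  push_cast
  linear_combination (-(Complex.exp (-(((r:ℂ)-(ρ:ℂ))*(τ:ℂ))))) * hadd

lemma my_aux (ρ κ r α β : ℝ) (hρ : 0 < ρ) (hκpos : 0 < κ)
    (hκρ : κ ^ 2 = 1 + 3 * ρ ^ 2) (hr : r = ρ + 4 * ρ ^ 3)
    (hα : α = -4 * ρ ^ 3 / (1 + 12 * ρ ^ 2))
    (hβ : β = -(1 / (2 * κ)) * (1 + 24 * ρ ^ 4 / (1 + 12 * ρ ^ 2))) :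
    (∀ θ : ℝ, (1:ℂ) + (-(((θ : ℂ) - Complex.I * (r : ℂ)) ^ 2)⁻¹ +
        2 * Complex.I * (r : ℂ) * (((θ : ℂ) - Complex.I * (r : ℂ)) ^ 3)⁻¹) ≠ 0) ∧
    (∀ τ : ℝ, 0 ≤ τ →
      -(((2 * Real.pi : ℝ) : ℂ))⁻¹ *
          (∫ θ : ℝ, ((-(((θ : ℂ) - Complex.I * (r : ℂ)) ^ 2)⁻¹ +
              2 * Complex.I * (r : ℂ) * (((θ : ℂ) - Complex.I * (r : ℂ)) ^ 3)⁻¹) /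
            (1 + (-(((θ : ℂ) - Complex.I * (r : ℂ)) ^ 2)⁻¹ +
              2 * Complex.I * (r : ℂ) * (((θ : ℂ) - Complex.I * (r : ℂ)) ^ 3)⁻¹))) *
            Complex.exp (Complex.I * (θ : ℂ) * (τ : ℂ))) =
        ((2 * α * Real.exp (-((2 * ρ + r) * τ)) -
          2 * Real.exp (-((r - ρ) * τ)) *
            (((α : ℂ) + (β : ℂ) * Complex.I) *
              Complex.exp (Complex.I * (κ : ℂ) * (τ : ℂ))).re : ℝ) : ℂ)) := by
  have hrpos : 0 < r := by rw [hr]; positivity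
  have h1 : 0 < r + 2*ρ := by linarith
  have h2 : 0 < r - ρ := by rw [hr]; nlinarith [pow_pos hρ 3]
  have hden : (0:ℝ) < 1 + 12 * ρ ^ 2 := by positivity
  have hα' : α * (1 + 12 * ρ ^ 2) = -4 * ρ ^ 3 := by
    rw [hα]; field_simp
  have hβ' : β * (2 * κ) * (1 + 12 * ρ ^ 2) = -(1 + 12 * ρ ^ 2 + 24 * ρ ^ 4) := by
    rw [hβ]; field_simp
  have hκc : (κ:ℂ) ^ 2 = 1 + 3 * (ρ:ℂ) ^ 2 := by exact_mod_cast congrArg Complex.ofReal hκρ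
  have hrc : (r:ℂ) = (ρ:ℂ) + 4 * (ρ:ℂ) ^ 3 := by exact_mod_cast congrArg Complex.ofReal hr
  have hαc : (α:ℂ) * (1 + 12 * (ρ:ℂ) ^ 2) = -4 * (ρ:ℂ) ^ 3 := by
    exact_mod_cast congrArg Complex.ofReal hα'
  have hβc : (β:ℂ) * (2 * (κ:ℂ)) * (1 + 12 * (ρ:ℂ) ^ 2)
      = -(1 + 12 * (ρ:ℂ) ^ 2 + 24 * (ρ:ℂ) ^ 4) := by
    exact_mod_cast congrArg Complex.ofReal hβ'
  constructor
  · exact fun θ => my_one_add_ne ρ κ r hκc hrc h1 h2 hrpos θ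
  · intro τ hτ
    have hfun : (fun θ : ℝ => ((-(((θ : ℂ) - Complex.I * (r : ℂ)) ^ 2)⁻¹ +
              2 * Complex.I * (r : ℂ) * (((θ : ℂ) - Complex.I * (r : ℂ)) ^ 3)⁻¹) /
            (1 + (-(((θ : ℂ) - Complex.I * (r : ℂ)) ^ 2)⁻¹ +
              2 * Complex.I * (r : ℂ) * (((θ : ℂ) - Complex.I * (r : ℂ)) ^ 3)⁻¹))) *
            Complex.exp (Complex.I * (θ : ℂ) * (τ : ℂ)))
        = fun θ : ℝ => ((((r:ℂ)+I*θ)+2*r)/(((r:ℂ)+I*θ)^3+((r:ℂ)+I*θ)+2*r))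
            * Complex.exp (I*θ*τ) := by
      funext θ
      rw [my_ratio ρ κ r hκc hrc h1 h2 hrpos θ]
    rw [hfun, my_integral_eq ρ κ r α β hρ hκpos hκc hrc hαc hβc h1 h2 τ,
      ← myg_eval ρ κ r α β τ hτ]
    have hπc : ((π:ℝ):ℂ) ≠ 0 := by exact_mod_cast Real.pi_ne_zero
    push_cast
    field_simp

end GreenAux


open MeasureTheory

/-- Explicit Green's function computation for the first generalized Poisson equilibrium:
with `K₂(ξ,θ) = -1/z² + 2i|ξ|/z³`, `z = θ - i|ξ|`, and `ρ, κ, α, β` the root parameters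
and partial fraction coefficients of the cubic `ζ³ + ζ + 2|ξ|`, one has `1 + K₂ ≠ 0` on
the real axis and the regular part of the Green's function equals
`2α e^{-(2ρ+|ξ|)τ} - 2 e^{-(|ξ|-ρ)τ} Re{(α+iβ) e^{iκτ}}` for `τ ≥ 0`. -/
theorem green_function_first_generalized_poisson (ξ : EuclideanSpace ℝ (Fin 3)) (hξ : ξ ≠ 0)
    (ρ κ : ℝ) (hρ : 0 < ρ) (hκ : 0 < κ)
    (hκρ : κ ^ 2 = 1 + 3 * ρ ^ 2) (hrρ : ‖ξ‖ = ρ + 4 * ρ ^ 3)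
    (α β : ℝ) (hα : α = -4 * ρ ^ 3 / (1 + 12 * ρ ^ 2))
    (hβ : β = -(1 / (2 * κ)) * (1 + 24 * ρ ^ 4 / (1 + 12 * ρ ^ 2))) :
    let K2 : ℝ → ℂ := fun θ =>
      -(((θ : ℂ) - Complex.I * (‖ξ‖ : ℂ)) ^ 2)⁻¹ +
        2 * Complex.I * (‖ξ‖ : ℂ) * (((θ : ℂ) - Complex.I * (‖ξ‖ : ℂ)) ^ 3)⁻¹
    (∀ θ : ℝ, 1 + K2 θ ≠ 0) ∧
    (∀ τ : ℝ, 0 ≤ τ →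
      -(((2 * Real.pi : ℝ) : ℂ))⁻¹ *
          (∫ θ : ℝ, (K2 θ / (1 + K2 θ)) * Complex.exp (Complex.I * (θ : ℂ) * (τ : ℂ))) =
        ((2 * α * Real.exp (-((2 * ρ + ‖ξ‖) * τ)) -
          2 * Real.exp (-((‖ξ‖ - ρ) * τ)) *
            (((α : ℂ) + (β : ℂ) * Complex.I) *
              Complex.exp (Complex.I * (κ : ℂ) * (τ : ℂ))).re : ℝ) : ℂ)) := by
  exact my_aux ρ κ ‖ξ‖ α β hρ hκ hκρ hrρ hα hβ
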